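/- Subset-sum reduction structure: Given a multiset of N nonnegative integers and a target T, there exists an expression using each number exactly once with only addition and multiplication-by-zero that evaluates to T if and only if some subset of the numbers sums to T, provided 0 can be produced by multiplying any unused numbers by a zero element. Formally: if one of the N numbers is 0, then T is achievable via operations {+, ×} with the restriction that × is only applied when one operand is 0, iff some subset of the nonzero numbers sums to T. -/

import Mathlib

/-- Expressions over natural numbers built from leaves via `+` and `×`. -/
inductive Expr where
  | leaf : ℕ → Expr
  | add : Expr → Expr → Expr
  | mul : Expr → Expr → Expr

/-- The value of an expression. -/
def Expr.eval : Expr → ℕ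
  | .leaf n => n
  | .add l r => l.eval + r.eval
  | .mul l r => l.eval * r.eval

/-- The multiset of numbers at the leaves of an expression. -/
def Expr.leaves : Expr → Multiset ℕ
  | .leaf n => {n}
  | .add l r => l.leaves + r.leaves
  | .mul l r => l.leaves + r.leaves

/-- Every multiplication node has at least one operand evaluating to `0`
(multiplication is only used to discard values by multiplying with zero). -/
def Expr.zeroMulOnly : Expr → Prop
  | .leaf _ => True
  | .add l r => l.zeroMulOnly ∧ r.zeroMulOnly
  | .mul l r => l.zeroMulOnly ∧ r.zeroMulOnly ∧ (l.eval = 0 ∨ r.eval = 0)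

/-!
Every multiplication node of an expression with `zeroMulOnly` evaluates to `0`, so its value is
the sum of the nonzero leaves that are not below a multiplication. Conversely, a
subset `s` is realised by adding its elements to the product of the remaining numbers, which
vanishes because the remaining numbers include a `0`.
-/

namespace Expr

theorem exists_le_filter_sum_eq_eval {e : Expr} (he : e.zeroMulOnly) :
    ∃ s ≤ e.leaves.filter (· ≠ 0), s.sum = e.eval := by
  induction e with
  | leaf n =>
    by_cases hn : n = 0
    · exact ⟨0, Multiset.zero_le _, by simp [eval, hn]⟩
    · exact ⟨{n}, by simp [leaves, Multiset.filter_singleton, hn], by simp [eval]⟩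
  | add l r ihl ihr =>
    obtain ⟨sl, hsl, hl⟩ := ihl he.1
    obtain ⟨sr, hsr, hr⟩ := ihr he.2
    refine ⟨sl + sr, ?_, by simp [eval, hl, hr]⟩
    simpa only [leaves, Multiset.filter_add] using add_le_add hsl hsr
  | mul l r =>
    refine ⟨0, Multiset.zero_le _, ?_⟩
    rcases he.2.2 with h | h <;> simp [eval, h]

theorem exists_leaves_eq_cons_zero_eval_eq_zero (M : Multiset ℕ) :
    ∃ e : Expr, e.leaves = 0 ::ₘ M ∧ e.zeroMulOnly ∧ e.eval = 0 := by
  induction M using Multiset.induction with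
  | empty => exact ⟨leaf 0, rfl, trivial, rfl⟩
  | cons a M ih =>
    obtain ⟨e, hl, hz, he⟩ := ih
    refine ⟨mul (leaf a) e, ?_, ⟨trivial, hz, Or.inr he⟩, by simp [eval, he]⟩
    simp [leaves, hl, Multiset.cons_swap]

theorem exists_leaves_eq_add_eval_eq_sum (s : Multiset ℕ) {M : Multiset ℕ} (hM : 0 ∈ M) :
    ∃ e : Expr, e.leaves = s + M ∧ e.zeroMulOnly ∧ e.eval = s.sum := by
  induction s using Multiset.induction with
  | empty =>
    obtain ⟨M', rfl⟩ := Multiset.exists_cons_of_mem hM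
    obtain ⟨e, hl, hz, he⟩ := exists_leaves_eq_cons_zero_eval_eq_zero M'
    exact ⟨e, by simp [hl], hz, by simp [he]⟩
  | cons a s ih =>
    obtain ⟨e, hl, hz, he⟩ := ih
    refine ⟨add (leaf a) e, ?_, ⟨trivial, hz⟩, by simp [eval, he]⟩
    simp [leaves, hl]

end Expr

/-- Subset-sum reduction structure: if one of the given numbers is `0`, then a
target `T` is achievable by an expression using each given number exactly once,
with operations `+` and `×` where `×` is only applied when one operand is `0`,
iff some subset of the nonzero given numbers sums to `T`. -/
theorem game24_subset_sum (S : Multiset ℕ) (h0 : (0 : ℕ) ∈ S) (T : ℕ) :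
    (∃ e : Expr, e.leaves = S ∧ e.zeroMulOnly ∧ e.eval = T) ↔
      ∃ s ≤ S.filter (fun x => x ≠ 0), s.sum = T := by
  constructor
  · rintro ⟨e, rfl, hz, rfl⟩
    exact Expr.exists_le_filter_sum_eq_eval hz
  · rintro ⟨s, hs, rfl⟩
    have hsS : s ≤ S := hs.trans (Multiset.filter_le _ S)
    have h0s : (0 : ℕ) ∉ s := fun h => (Multiset.of_mem_filter (Multiset.mem_of_le hs h)) rfl
    have h0rest : (0 : ℕ) ∈ S - s := by
      rw [Multiset.mem_sub, Multiset.count_eq_zero.mpr h0s]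
      exact Multiset.count_pos.mpr h0
    obtain ⟨e, hl, hz, he⟩ := Expr.exists_leaves_eq_add_eval_eq_sum s h0rest
    exact ⟨e, hl.trans (add_tsub_cancel_of_le hsS), hz, he⟩
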